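/- Let L = 3, R = 3/4, \ell \ge 0, D > 0, and set \alpha = \ell/R and \alpha_c = (4-\pi)(\sqrt{2}+1)/\pi. Then the constant steady state is linearly unstable in the first mode, i.e. D + \hat V_1 < 0, if and only if \alpha < \alpha_c and R^2 > D \pi^2 (2+\sqrt{2}) / (8(\alpha_c - \alpha)). -/

import Mathlib

/-!
`V` is even, continuous and vanishes outside `[-R, R]`, so
`Re V̂_k = (1/L) ∫₀ᴿ ((x - ℓ)² - (R - ℓ)²) cos (c x) dx` with `c = π k / L`, which integrates in
closed form. For `L = 4R` and `k = 1` the phase is `z = π/4`, where `sin z = cos z = √2/2`, and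
the closed form collapses to `V̂₁ = -8R²(α_c - α) / (π²(2 + √2))`. Hence `D + V̂₁ < 0` with
`D > 0` forces `α < α_c`, and is then the stated lower bound on `R²`.
-/

open Real MeasureTheory

/-- The 1D interaction potential: `V x = (|x| - ℓ)^2 - (R - ℓ)^2` for `|x| < R`, `0` otherwise. -/
noncomputable def potV (R ℓ : ℝ) (x : ℝ) : ℝ :=
  if |x| < R then (|x| - ℓ) ^ 2 - (R - ℓ) ^ 2 else 0

/-- The `k`-th Fourier coefficient of `V` on the periodic domain `[-L, L]`.
It is a real number since `V` is real and even. -/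
noncomputable def VhatC (L R ℓ : ℝ) (k : ℤ) : ℂ :=
  (1 / (2 * L)) *
    ∫ x in (-L)..L, (potV R ℓ x : ℂ) *
      Complex.exp (-(Complex.I * (π : ℂ) * (k : ℂ) * (x : ℂ) / (L : ℂ)))

namespace potV

variable {R ℓ : ℝ}

theorem neg (x : ℝ) : potV R ℓ (-x) = potV R ℓ x := by
  simp only [potV, abs_neg]

theorem of_abs_le {x : ℝ} (hx : |x| ≤ R) : potV R ℓ x = (|x| - ℓ) ^ 2 - (R - ℓ) ^ 2 := by
  rcases hx.lt_or_eq with hx | hx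
  · exact if_pos hx
  · simp [potV, hx]

theorem of_le_abs {x : ℝ} (hx : R ≤ |x|) : potV R ℓ x = 0 :=
  if_neg hx.not_gt

@[fun_prop]
theorem continuous (R ℓ : ℝ) : Continuous (potV R ℓ) := by
  have h : potV R ℓ = fun x => if R ≤ |x| then 0 else (|x| - ℓ) ^ 2 - (R - ℓ) ^ 2 := by
    funext x
    simp only [potV, ← not_le, ite_not]
  rw [h]
  exact Continuous.if_le continuous_const (by fun_prop) continuous_const (by fun_prop)
    fun x hx => by simp [hx]

end potV

theorem intervalIntegral.integral_neg_self_of_even {f : ℝ → ℝ} (hf : ∀ x, f (-x) = f x) {a : ℝ}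
    (hint : IntervalIntegrable f volume (-a) a) :
    ∫ x in -a..a, f x = 2 * ∫ x in 0..a, f x := by
  have h0 : (0 : ℝ) ∈ Set.uIcc (-a) a := by
    rcases le_total 0 a with h | h
    · exact Set.mem_uIcc_of_le (by linarith) h
    · exact Set.mem_uIcc_of_ge h (by linarith)
  have hneg : ∫ x in -a..0, f x = ∫ x in 0..a, f x := by
    simpa [hf] using (intervalIntegral.integral_comp_neg (a := 0) (b := a) f).symm
  rw [← intervalIntegral.integral_add_adjacent_intervals
    (hint.mono_set (Set.uIcc_subset_uIcc_left h0)) (hint.mono_set (Set.uIcc_subset_uIcc_right h0)),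
    hneg, two_mul]

theorem integral_sq_sub_sq_mul_cos {c : ℝ} (hc : c ≠ 0) (R ℓ : ℝ) :
    ∫ x in 0..R, ((x - ℓ) ^ 2 - (R - ℓ) ^ 2) * cos (c * x)
      = 2 * ((R - ℓ) * cos (c * R) + ℓ) / c ^ 2 - 2 * sin (c * R) / c ^ 3 := by
  let F : ℝ → ℝ := fun x => ((x - ℓ) ^ 2 - (R - ℓ) ^ 2) * sin (c * x) / c
    + 2 * (x - ℓ) * cos (c * x) / c ^ 2 - 2 * sin (c * x) / c ^ 3
  have hF : ∀ x, HasDerivAt F (((x - ℓ) ^ 2 - (R - ℓ) ^ 2) * cos (c * x)) x := by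
    intro x
    have hcx : HasDerivAt (c * ·) c x := by simpa using (hasDerivAt_id x).const_mul c
    have hp : HasDerivAt (fun x => (x - ℓ) ^ 2 - (R - ℓ) ^ 2) (2 * (x - ℓ)) x := by
      simpa using (((hasDerivAt_id x).sub_const ℓ).pow 2).sub_const ((R - ℓ) ^ 2)
    have hq : HasDerivAt (fun x => 2 * (x - ℓ)) 2 x := by
      simpa using ((hasDerivAt_id x).sub_const ℓ).const_mul 2
    refine ((hp.mul hcx.sin).div_const c |>.add ((hq.mul hcx.cos).div_const (c ^ 2))
      |>.sub ((hcx.sin.const_mul 2).div_const (c ^ 3))).congr_deriv ?_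
    field_simp
    ring
  rw [intervalIntegral.integral_eq_sub_of_hasDerivAt (fun x _ => hF x)
    ((by fun_prop : Continuous _).intervalIntegrable _ _)]
  simp only [F, mul_zero, sin_zero, cos_zero]
  ring

theorem integral_potV_mul_cos {R L : ℝ} (hR : 0 ≤ R) (hRL : R ≤ L) (ℓ : ℝ) {c : ℝ} (hc : c ≠ 0) :
    ∫ x in -L..L, potV R ℓ x * cos (c * x)
      = 2 * (2 * ((R - ℓ) * cos (c * R) + ℓ) / c ^ 2 - 2 * sin (c * R) / c ^ 3) := by
  have hint : ∀ a b, IntervalIntegrable (fun x => potV R ℓ x * cos (c * x)) volume a b :=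
    (by fun_prop : Continuous _).intervalIntegrable
  have hinner : ∫ x in 0..R, potV R ℓ x * cos (c * x)
      = ∫ x in 0..R, ((x - ℓ) ^ 2 - (R - ℓ) ^ 2) * cos (c * x) := by
    refine intervalIntegral.integral_congr fun x hx => ?_
    rw [Set.uIcc_of_le hR] at hx
    rw [potV.of_abs_le (abs_le.2 ⟨by linarith [hx.1], hx.2⟩), abs_of_nonneg hx.1]
  have houter : ∫ x in R..L, potV R ℓ x * cos (c * x) = 0 := by
    refine (intervalIntegral.integral_congr fun x hx => ?_).trans intervalIntegral.integral_zero
    rw [Set.uIcc_of_le hRL] at hx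
    simp [potV.of_le_abs (hx.1.trans (le_abs_self x))]
  rw [intervalIntegral.integral_neg_self_of_even (fun x => by rw [potV.neg, mul_neg, cos_neg])
    (hint _ _), ← intervalIntegral.integral_add_adjacent_intervals (hint 0 R) (hint R L),
    houter, add_zero, hinner, integral_sq_sub_sq_mul_cos hc]

theorem VhatC_re_eq_integral (L R ℓ : ℝ) (k : ℤ) :
    (VhatC L R ℓ k).re = 1 / (2 * L) * ∫ x in -L..L, potV R ℓ x * cos (π * k / L * x) := by
  have hphase : ∀ x : ℝ,
      -(Complex.I * π * k * x / L) = ((-(π * k / L * x) : ℝ) : ℂ) * Complex.I := by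
    intro x
    push_cast
    ring
  have hint : IntervalIntegrable (fun x : ℝ => (potV R ℓ x : ℂ) *
      Complex.exp (-(Complex.I * π * k * x / L))) volume (-L) L := by
    simp_rw [hphase]
    exact (by fun_prop : Continuous _).intervalIntegrable _ _
  rw [VhatC, show (1 / (2 * L) : ℂ) = ((1 / (2 * L) : ℝ) : ℂ) by push_cast; rfl,
    Complex.re_ofReal_mul, ← RCLike.re_to_complex, ← intervalIntegral.intervalIntegral_re hint]
  simp_rw [hphase, RCLike.re_to_complex, Complex.re_ofReal_mul, Complex.exp_ofReal_mul_I_re,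
    cos_neg]

theorem VhatC_re {L R : ℝ} (hR : 0 < R) (hRL : R ≤ L) (ℓ : ℝ) {k : ℤ} (hk : k ≠ 0) {z : ℝ}
    (hz : z = π * R * |(k : ℝ)| / L) :
    (VhatC L R ℓ k).re
      = 2 * R ^ 3 / L * (-sin z / z ^ 3 + (1 - ℓ / R) * cos z / z ^ 2 + ℓ / R / z ^ 2) := by
  have hL : 0 < L := hR.trans_le hRL
  have hk' : (k : ℝ) ≠ 0 := Int.cast_ne_zero.2 hk
  have hc : π * k / L ≠ 0 := by positivity
  rw [VhatC_re_eq_integral, integral_potV_mul_cos hR.le hRL ℓ hc]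
  rcases abs_choice (k : ℝ) with habs | habs <;> rw [habs] at hz
  · rw [hz]
    field_simp
    ring
  · rw [hz, show π * R * -k / L = -(π * k / L * R) by ring, sin_neg, cos_neg]
    field_simp
    ring

theorem VhatC_four_mul_self_one_re {R : ℝ} (hR : 0 < R) (ℓ : ℝ) :
    (VhatC (4 * R) R ℓ 1).re
      = -(8 * R ^ 2 * ((4 - π) * (√2 + 1) / π - ℓ / R) / (π ^ 2 * (2 + √2))) := by
  have hs : √2 ^ 2 = 2 := sq_sqrt zero_le_two
  rw [VhatC_re hR (by linarith) ℓ one_ne_zero (z := π / 4) (by field_simp; simp),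
    sin_pi_div_four, cos_pi_div_four]
  field_simp
  linear_combination (4 * R * π - 16 * R - 4 * π * ℓ) * hs

theorem lt_mul_iff_pos_and_div_lt {a b c : ℝ} (ha : 0 < a) (hb : 0 < b) :
    a < b * c ↔ 0 < c ∧ a / c < b := by
  constructor
  · intro h
    have hc : 0 < c := pos_of_mul_pos_right (ha.trans h) hb.le
    exact ⟨hc, (div_lt_iff₀ hc).2 h⟩
  · rintro ⟨hc, h⟩
    exact (div_lt_iff₀ hc).1 h

theorem add_VhatC_four_mul_self_one_re_neg_iff {R : ℝ} (hR : 0 < R) (ℓ : ℝ) {D : ℝ} (hD : 0 < D) :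
    D + (VhatC (4 * R) R ℓ 1).re < 0 ↔
      ℓ / R < (4 - π) * (√2 + 1) / π ∧
        R ^ 2 > D * π ^ 2 * (2 + √2) / (8 * ((4 - π) * (√2 + 1) / π - ℓ / R)) := by
  set t := (4 - π) * (√2 + 1) / π - ℓ / R
  have ht : ℓ / R < (4 - π) * (√2 + 1) / π ↔ 0 < 8 * t := by
    constructor <;> intro <;> linarith
  rw [VhatC_four_mul_self_one_re hR, ← sub_eq_add_neg, sub_neg, lt_div_iff₀ (by positivity), ht,
    show 8 * R ^ 2 * t = R ^ 2 * (8 * t) by ring, ← mul_assoc,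
    lt_mul_iff_pos_and_div_lt (by positivity) (by positivity), gt_iff_lt]

theorem instability_region_1D_general (ℓ D : ℝ) (hD : 0 < D) :
    D + (VhatC 3 (3 / 4) ℓ 1).re < 0 ↔
      ℓ / (3 / 4) < (4 - π) * (Real.sqrt 2 + 1) / π ∧
        (3 / 4 : ℝ) ^ 2 >
          D * π ^ 2 * (2 + Real.sqrt 2) /
            (8 * ((4 - π) * (Real.sqrt 2 + 1) / π - ℓ / (3 / 4))) := by
  have h := add_VhatC_four_mul_self_one_re_neg_iff (R := 3 / 4) (by norm_num) ℓ hD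
  rwa [show (4 : ℝ) * (3 / 4) = 3 by norm_num] at h

/-- Instability region for `L = 3`, `R = 3/4`: the first mode of the constant steady state is
linearly unstable (`D + V̂₁ < 0`) iff `α < α_c` and `R² > Dπ²(2 + √2)/(8(α_c - α))`,
where `α = ℓ/R` and `α_c = (4 - π)(√2 + 1)/π`. -/
theorem instability_region_1D (ℓ D : ℝ) (hℓ : 0 ≤ ℓ) (hD : 0 < D) :
    D + (VhatC 3 (3 / 4) ℓ 1).re < 0 ↔
      ℓ / (3 / 4) < (4 - π) * (Real.sqrt 2 + 1) / π ∧
        (3 / 4 : ℝ) ^ 2 >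
          D * π ^ 2 * (2 + Real.sqrt 2) /
            (8 * ((4 - π) * (Real.sqrt 2 + 1) / π - ℓ / (3 / 4))) :=
  instability_region_1D_general ℓ D hD
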